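/- Fix real constants p > 2, β > 0, Λ > 0 and a nonempty compact set W ⊂ ℝ × [0,∞). There exists T₀ > 0 such that for every T ≥ T₀ and every continuously differentiable U : [0,T] → ℝ² satisfying Condition I with U(t) ∈ W for all t ∈ [0,T] and with U₁(0) < 0, there exists t* ∈ (0, T₀] with U₁(t*) = 0, U₂(t*) > 0, and U₁(t) < 0 for all t ∈ [0, t*). -/

import Mathlib

open Set

/-- `F₁(u,v) = -p·u + β·v`. -/
noncomputable def F1 (p β : ℝ) (z : ℝ × ℝ) : ℝ := -p * z.1 + β * z.2

/-- `F₂ᴸ(u,v) = 2p(p-1) - 2(p-1)v + 2pu(pu - βv) - 2βΛv`. -/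
noncomputable def F2L (p β Λ : ℝ) (z : ℝ × ℝ) : ℝ :=
  2 * p * (p - 1) - 2 * (p - 1) * z.2 + 2 * p * z.1 * (p * z.1 - β * z.2) - 2 * β * Λ * z.2

/-- `F₂ᵁ(u,v) = 2p(p-1) - 2(p-1)v + 2pu(pu - βv) + 2βΛv`. -/
noncomputable def F2U (p β Λ : ℝ) (z : ℝ × ℝ) : ℝ :=
  2 * p * (p - 1) - 2 * (p - 1) * z.2 + 2 * p * z.1 * (p * z.1 - β * z.2) + 2 * β * Λ * z.2

/-- The lower bounding vector field `Φ_L = (F₁, F₂ᴸ)`. -/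
noncomputable def PhiL (p β Λ : ℝ) (z : ℝ × ℝ) : ℝ × ℝ := (F1 p β z, F2L p β Λ z)

/-- The upper bounding vector field `Φ_U = (F₁, F₂ᵁ)`. -/
noncomputable def PhiU (p β Λ : ℝ) (z : ℝ × ℝ) : ℝ × ℝ := (F1 p β z, F2U p β Λ z)

/-- **Condition I**: `U : [0,T] → ℝ²` is `C¹` with derivative `U'` satisfying
`U₁' = F₁(U)` and `F₂ᴸ(U) ≤ U₂' ≤ F₂ᵁ(U)` on `[0,T]`. -/
def CondI (p β Λ T : ℝ) (U U' : ℝ → ℝ × ℝ) : Prop :=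
  (∀ t ∈ Icc (0 : ℝ) T, HasDerivWithinAt U (U' t) (Icc (0 : ℝ) T) t) ∧
  ContinuousOn U' (Icc (0 : ℝ) T) ∧
  (∀ t ∈ Icc (0 : ℝ) T, (U' t).1 = F1 p β (U t)) ∧
  (∀ t ∈ Icc (0 : ℝ) T, F2L p β Λ (U t) ≤ (U' t).2 ∧ (U' t).2 ≤ F2U p β Λ (U t))

/-!
While `u ≤ 0` and `v ≥ 0`, Condition I gives `v' ≥ 2p(p-1) - c v` with `c = 2(p-1) + 2βΛ`, so
`v(t) ≥ min(m, p(p-1) t)` for `m = p(p-1)/c`. Hence `v ≥ m` after the fixed time `m/(p(p-1))`,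
and from then on `u' = -pu + βv ≥ βm`; since `u` is bounded below on the compact set `W`, it
reaches `0` within a time depending only on `W`. At the first zero `t*` of `u` the same floor
gives `v(t*) ≥ min(m, p(p-1) t*) > 0`.
-/

theorem HasDerivAt.fst {𝕜 E F : Type*} [NontriviallyNormedField 𝕜] [NormedAddCommGroup E]
    [NormedSpace 𝕜 E] [NormedAddCommGroup F] [NormedSpace 𝕜 F] {f : 𝕜 → E × F} {f' : E × F}
    {x : 𝕜} (h : HasDerivAt f f' x) : HasDerivAt (fun t => (f t).1) f'.1 x := by
  simpa using h.hasFDerivAt.fst.hasDerivAt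

theorem HasDerivAt.snd {𝕜 E F : Type*} [NontriviallyNormedField 𝕜] [NormedAddCommGroup E]
    [NormedSpace 𝕜 E] [NormedAddCommGroup F] [NormedSpace 𝕜 F] {f : 𝕜 → E × F} {f' : E × F}
    {x : 𝕜} (h : HasDerivAt f f' x) : HasDerivAt (fun t => (f t).2) f'.2 x := by
  simpa using h.hasFDerivAt.snd.hasDerivAt

theorem mul_sub_le_sub_of_le_hasDerivAt {f f' : ℝ → ℝ} {s t C : ℝ} (hst : s ≤ t)
    (hf : ContinuousOn f (Icc s t)) (hf' : ∀ r ∈ Ioo s t, HasDerivAt f (f' r) r)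
    (hC : ∀ r ∈ Ioo s t, C ≤ f' r) : C * (t - s) ≤ f t - f s := by
  refine (convex_Icc s t).mul_sub_le_image_sub_of_le_deriv hf ?_ ?_ s (left_mem_Icc.2 hst) t
    (right_mem_Icc.2 hst) hst <;> rw [interior_Icc]
  · exact fun r hr => (hf' r hr).differentiableAt.differentiableWithinAt
  · exact fun r hr => (hf' r hr).deriv ▸ hC r hr

/-- After the last time `f` is at or above `m`, it grows at rate at least `b`. -/
theorem min_le_of_le_hasDerivAt_of_lt {f f' : ℝ → ℝ} {s t m b : ℝ} (hst : s ≤ t) (hb : 0 ≤ b)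
    (hf : ContinuousOn f (Icc s t)) (hf' : ∀ r ∈ Ioo s t, HasDerivAt f (f' r) r)
    (hbound : ∀ r ∈ Ioo s t, f r < m → b ≤ f' r) : min m (f s + b * (t - s)) ≤ f t := by
  rcases em (∃ r ∈ Icc s t, m ≤ f r) with ⟨r, hr, hmr⟩ | hK
  · have hKc : IsCompact (Icc s t ∩ f ⁻¹' Ici m) :=
      isCompact_Icc.of_isClosed_subset (hf.preimage_isClosed_of_isClosed isClosed_Icc isClosed_Ici)
        inter_subset_left
    obtain ⟨r₀, ⟨hr₀, hmr₀⟩, hlast⟩ := hKc.exists_isGreatest ⟨r, hr, hmr⟩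
    have hbelow : ∀ r ∈ Ioo r₀ t, f r < m := fun r hr =>
      lt_of_not_ge fun hmr => hr.1.not_ge (hlast ⟨⟨hr₀.1.trans hr.1.le, hr.2.le⟩, hmr⟩)
    have hgrow := mul_sub_le_sub_of_le_hasDerivAt hr₀.2 (hf.mono (Icc_subset_Icc_left hr₀.1))
      (fun r hr => hf' r ⟨hr₀.1.trans_lt hr.1, hr.2⟩)
      (fun r hr => hbound r ⟨hr₀.1.trans_lt hr.1, hr.2⟩ (hbelow r hr))
    have := mul_nonneg hb (sub_nonneg.2 hr₀.2)
    exact (min_le_left _ _).trans (by simp only [mem_preimage, mem_Ici] at hmr₀; linarith)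
  · push Not at hK
    have := mul_sub_le_sub_of_le_hasDerivAt hst hf hf'
      (fun r hr => hbound r hr (hK r (Ioo_subset_Icc_self hr)))
    exact (min_le_right _ _).trans (by linarith)

theorem ContinuousOn.exists_first_zero {f : ℝ → ℝ} {a b : ℝ} (hab : a ≤ b)
    (hf : ContinuousOn f (Icc a b)) (ha : f a < 0) (hb : 0 ≤ f b) :
    ∃ c ∈ Ioc a b, f c = 0 ∧ ∀ x ∈ Ico a c, f x < 0 := by
  have hKc : IsCompact (Icc a b ∩ f ⁻¹' Ici 0) :=
    isCompact_Icc.of_isClosed_subset (hf.preimage_isClosed_of_isClosed isClosed_Icc isClosed_Ici)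
      inter_subset_left
  obtain ⟨c, ⟨hc, hfc⟩, hfirst⟩ := hKc.exists_isLeast ⟨b, ⟨hab, le_rfl⟩, hb⟩
  simp only [mem_preimage, mem_Ici] at hfc
  have hac : a < c := lt_of_le_of_ne hc.1 fun h => (h ▸ ha).not_ge hfc
  have hbefore : ∀ x ∈ Ico a c, f x < 0 := fun x hx =>
    lt_of_not_ge fun hfx => hx.2.not_ge (hfirst ⟨⟨hx.1, hx.2.le.trans hc.2⟩, hfx⟩)
  obtain ⟨z, hz, hfz⟩ := intermediate_value_Icc hac.le (hf.mono (Icc_subset_Icc_right hc.2))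
    ⟨ha.le, hfc⟩
  have hzc : z = c := le_antisymm hz.2 (hfirst ⟨⟨hz.1, hz.2.trans hc.2⟩, hfz.ge⟩)
  exact ⟨c, ⟨hac, hc.2⟩, hzc ▸ hfz, hbefore⟩

theorem sub_mul_le_F2L {p β Λ : ℝ} (hp : 0 ≤ p) (hβ : 0 ≤ β) {z : ℝ × ℝ} (hu : z.1 ≤ 0)
    (hv : 0 ≤ z.2) : 2 * p * (p - 1) - (2 * (p - 1) + 2 * β * Λ) * z.2 ≤ F2L p β Λ z := by
  have : 0 ≤ p * β * (-z.1) * z.2 := by have := neg_nonneg.2 hu; positivity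
  unfold F2L
  nlinarith [sq_nonneg (p * z.1)]

namespace CondI

variable {p β Λ T : ℝ} {U U' : ℝ → ℝ × ℝ}

theorem continuousOn (h : CondI p β Λ T U U') : ContinuousOn U (Icc 0 T) :=
  fun t ht => (h.1 t ht).continuousWithinAt

theorem hasDerivAt (h : CondI p β Λ T U U') {t : ℝ} (ht : t ∈ Ioo 0 T) :
    HasDerivAt U (U' t) t :=
  (h.1 t (Ioo_subset_Icc_self ht)).hasDerivAt (Icc_mem_nhds ht.1 ht.2)

theorem mul_sub_le_fst (h : CondI p β Λ T U U') (hp : 0 ≤ p) (hβ : 0 ≤ β) {s t m : ℝ}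
    (hs : 0 ≤ s) (hst : s ≤ t) (htT : t ≤ T) (hu : ∀ r ∈ Ioo s t, (U r).1 ≤ 0)
    (hv : ∀ r ∈ Ioo s t, m ≤ (U r).2) : β * m * (t - s) ≤ (U t).1 - (U s).1 := by
  have hsub : Ioo s t ⊆ Ioo 0 T := Ioo_subset_Ioo hs htT
  refine mul_sub_le_sub_of_le_hasDerivAt hst
    (h.continuousOn.fst.mono (Icc_subset_Icc hs htT)) (fun r hr => (h.hasDerivAt (hsub hr)).fst)
    fun r hr => ?_
  rw [h.2.2.1 r (Ioo_subset_Icc_self (hsub hr)), F1]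
  nlinarith [mul_le_mul_of_nonneg_left (hv r hr) hβ, hu r hr]

theorem min_le_snd (h : CondI p β Λ T U U') (hp : 1 ≤ p) (hβ : 0 ≤ β) (hΛ : 0 ≤ Λ)
    (hv : ∀ r ∈ Icc 0 T, 0 ≤ (U r).2) {m t : ℝ} (hm : (2 * (p - 1) + 2 * β * Λ) * m ≤ p * (p - 1))
    (ht : t ∈ Icc 0 T) (hu : ∀ r ∈ Ioo 0 t, (U r).1 ≤ 0) : min m (p * (p - 1) * t) ≤ (U t).2 := by
  have hsub : Ioo 0 t ⊆ Ioo 0 T := Ioo_subset_Ioo_right ht.2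
  have hc : 0 ≤ 2 * (p - 1) + 2 * β * Λ := by nlinarith [mul_nonneg hβ hΛ]
  have hfloor := min_le_of_le_hasDerivAt_of_lt ht.1 (b := p * (p - 1)) (by nlinarith) (m := m)
    (h.continuousOn.snd.mono (Icc_subset_Icc_right ht.2))
    (fun r hr => (h.hasDerivAt (hsub hr)).snd) fun r hr hvm => by
      have hrT := Ioo_subset_Icc_self (hsub hr)
      have := sub_mul_le_F2L (Λ := Λ) (by linarith : 0 ≤ p) hβ (hu r hr) (hv r hrT)
      nlinarith [(h.2.2.2 r hrT).1, mul_le_mul_of_nonneg_left hvm.le hc]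
  have hv0 := hv 0 ⟨le_rfl, ht.1.trans ht.2⟩
  exact (min_le_min_left m (by linarith)).trans hfloor

end CondI

theorem exit_A4
    (p β Λ : ℝ) (hp : 2 < p) (hβ : 0 < β) (hΛ : 0 < Λ)
    (W : Set (ℝ × ℝ)) (hWc : IsCompact W)
    (hWpos : ∀ z ∈ W, 0 ≤ z.2) :
    ∃ T₀ > (0 : ℝ), ∀ T ≥ T₀, ∀ U U' : ℝ → ℝ × ℝ,
      CondI p β Λ T U U' → (∀ t ∈ Icc (0 : ℝ) T, U t ∈ W) → (U 0).1 < 0 →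
      ∃ tstar ∈ Ioc (0 : ℝ) T₀,
        (U tstar).1 = 0 ∧ 0 < (U tstar).2 ∧ ∀ t ∈ Ico (0 : ℝ) tstar, (U t).1 < 0 := by
  obtain ⟨L, hL⟩ := (hWc.image continuous_fst).bddBelow
  have ha : 0 < p * (p - 1) := by nlinarith
  have hc : 0 < 2 * (p - 1) + 2 * β * Λ := by nlinarith [mul_pos hβ hΛ]
  set m := p * (p - 1) / (2 * (p - 1) + 2 * β * Λ)
  have hm : 0 < m := div_pos ha hc
  have hcm : (2 * (p - 1) + 2 * β * Λ) * m = p * (p - 1) := mul_div_cancel₀ _ hc.ne'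
  -- `v ≥ m` from time `T₁` on, so `u' ≥ β m` and `u` climbs from `L` or above to `0` by `T₀`.
  set T₁ := m / (p * (p - 1))
  set T₀ := T₁ + |L| / (β * m)
  have hT₁ : 0 < T₁ := div_pos hm ha
  have haT₁ : p * (p - 1) * T₁ = m := mul_div_cancel₀ _ ha.ne'
  have hT₁T₀ : T₁ ≤ T₀ := le_add_of_nonneg_right (by positivity)
  have hgain : β * m * (T₀ - T₁) = |L| := by
    rw [add_sub_cancel_left]; field_simp
  refine ⟨T₀, by positivity, fun T hT U U' hU hUW hU0 => ?_⟩
  have hfloor := fun {t} ht hu =>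
    hU.min_le_snd (by linarith) hβ.le hΛ.le (fun r hr => hWpos _ (hUW r hr)) hcm.le (t := t) ht hu
  obtain ⟨s, hs, hus⟩ : ∃ s ∈ Icc 0 T₀, 0 ≤ (U s).1 := by
    by_contra! hneg
    have hvm : ∀ r ∈ Ioo T₁ T₀, m ≤ (U r).2 := fun r hr => by
      have := hfloor ⟨hT₁.le.trans hr.1.le, hr.2.le.trans hT⟩
        fun r' hr' => (hneg r' ⟨hr'.1.le, hr'.2.le.trans hr.2.le⟩).le
      rwa [min_eq_left (by nlinarith [hr.1])] at this
    have hgrow := hU.mul_sub_le_fst (by linarith) hβ.le hT₁.le hT₁T₀ hT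
      (fun r hr => (hneg r ⟨hT₁.le.trans hr.1.le, hr.2.le⟩).le) hvm
    have hLT₁ := hL ⟨U T₁, hUW T₁ ⟨hT₁.le, hT₁T₀.trans hT⟩, rfl⟩
    linarith [neg_abs_le L, hneg T₀ ⟨by positivity, le_rfl⟩]
  obtain ⟨t, ht, hut, hneg⟩ := (hU.continuousOn.fst.mono
    (Icc_subset_Icc_right (hs.2.trans hT))).exists_first_zero hs.1 hU0 hus
  refine ⟨t, ⟨ht.1, ht.2.trans hs.2⟩, hut, ?_, hneg⟩
  exact (lt_min hm (by nlinarith [ht.1])).trans_le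
    (hfloor ⟨ht.1.le, ht.2.trans (hs.2.trans hT)⟩ fun r hr => (hneg r ⟨hr.1.le, hr.2⟩).le)
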